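/- arXiv:0711.2820 — 4 statements merged into one kernel-verified Lean document; each statement's English description precedes it below -/
import Mathlib

section
/- Let s ≥ 1 be an integer, m_0(ξ) = (1/p) Σ_{k=0}^{p^s−1} β_k χ_p(kξ) a trigonometric polynomial, and g : ℚ_p → ℂ a function satisfying g(ξ) = m_0(ξ/p^{s−1}) g(pξ) for all ξ ∈ ℚ_p. If g is continuous at 0 and g(0) ≠ 0, then for every ξ ∈ ℚ_p all but finitely many of the factors m_0(ξ/p^{s−j}), j = 1,2,…, are equal to 1 and g(ξ) = g(0) ∏_{j=1}^{∞} m_0(ξ/p^{s−j}). -/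
open Filter

noncomputable section

variable {p : ℕ} [Fact p.Prime]

/-- The `p`-adic fractional part `{x}_p` of `x ∈ ℚ_p` (as a rational number). -/
def padicFrac {p : ℕ} [Fact p.Prime] (x : ℚ_[p]) : ℚ :=
  let γ : ℕ := (-x.valuation).toNat
  if h : ‖x * (p : ℚ_[p]) ^ γ‖ ≤ 1 then
    (PadicInt.appr (⟨x * (p : ℚ_[p]) ^ γ, h⟩ : ℤ_[p]) γ : ℚ) / (p : ℚ) ^ γ
  else 0

/-- The standard additive character `χ_p(x) = exp(2πi {x}_p)` of `ℚ_p`. -/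
def padicChar {p : ℕ} [Fact p.Prime] (x : ℚ_[p]) : ℂ :=
  Complex.exp (2 * Real.pi * Complex.I * (padicFrac x : ℂ))

lemma padicFrac_eq_zero_of_norm_le_one {p : ℕ} [Fact p.Prime] (x : ℚ_[p])
    (h : ‖x‖ ≤ 1) : padicFrac x = 0 := by
  have hγ : (-x.valuation).toNat = 0 := by
    rw [Padic.norm_le_one_iff_val_nonneg] at h
    omega
  unfold padicFrac
  simp only [hγ, pow_zero, mul_one]
  rw [dif_pos h]
  simp [show PadicInt.appr (⟨x, h⟩ : ℤ_[p]) 0 = 0 from rfl]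

lemma padicChar_eq_one_of_norm_le_one {p : ℕ} [Fact p.Prime] (x : ℚ_[p])
    (h : ‖x‖ ≤ 1) : padicChar x = 1 := by
  rw [padicChar, padicFrac_eq_zero_of_norm_le_one x h]
  simp

/-- Let `m_0(ξ) = (1/p) Σ_{k=0}^{p^s−1} β_k χ_p(kξ)` and let `g : ℚ_p → ℂ` satisfy
`g(ξ) = m_0(ξ/p^{s−1}) g(pξ)` for all `ξ`. If `g` is continuous at `0` and `g(0) ≠ 0`,
then for every `ξ` all but finitely many of the factors `m_0(ξ/p^{s−j})`, `j = 1,2,…`,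
equal `1`, and `g(ξ) = g(0) ∏_{j=1}^{∞} m_0(ξ/p^{s−j})`. -/
theorem padic_refinable_infinite_product
    (s : ℕ) (hs : 1 ≤ s) (β : ℕ → ℂ) (m₀ g : ℚ_[p] → ℂ)
    (hm₀ : ∀ ξ : ℚ_[p],
      m₀ ξ = (1 / (p : ℂ)) * ∑ k ∈ Finset.range (p ^ s), β k * padicChar ((k : ℚ_[p]) * ξ))
    (hg : ∀ ξ : ℚ_[p], g ξ = m₀ (ξ * (p : ℚ_[p]) ^ (1 - (s : ℤ))) * g ((p : ℚ_[p]) * ξ))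
    (hcont : ContinuousAt g 0) (hg0 : g 0 ≠ 0) :
    ∀ ξ : ℚ_[p],
      (∀ᶠ j : ℕ in atTop, m₀ (ξ * (p : ℚ_[p]) ^ ((j : ℤ) + 1 - (s : ℤ))) = 1) ∧
        g ξ = g 0 * ∏' j : ℕ, m₀ (ξ * (p : ℚ_[p]) ^ ((j : ℤ) + 1 - (s : ℤ))) := by
  have hp0 : (p : ℚ_[p]) ≠ 0 := Nat.cast_ne_zero.mpr (Fact.out : p.Prime).ne_zero
  have hpR : (1 : ℝ) ≤ (p : ℝ) := by exact_mod_cast (Fact.out : p.Prime).one_lt.le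
  -- m₀ is constant = m₀ 0 on the unit ball
  have hmconst : ∀ x : ℚ_[p], ‖x‖ ≤ 1 → m₀ x = m₀ 0 := by
    intro x hx
    rw [hm₀ x, hm₀ 0]
    congr 1
    apply Finset.sum_congr rfl
    intro k _
    have hk : ‖(k : ℚ_[p])‖ ≤ 1 := by
      simpa using Padic.norm_int_le_one (p := p) (k : ℤ)
    rw [padicChar_eq_one_of_norm_le_one, padicChar_eq_one_of_norm_le_one]
    · simpa using hk
    · calc ‖(k : ℚ_[p]) * x‖ = ‖(k : ℚ_[p])‖ * ‖x‖ := norm_mul _ _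
        _ ≤ 1 * 1 := mul_le_mul hk hx (norm_nonneg _) zero_le_one
        _ = 1 := one_mul 1
  -- m₀ 0 = 1
  have hm0one : m₀ 0 = 1 := by
    have h0 := hg 0
    rw [zero_mul, mul_zero] at h0
    have h2 : m₀ 0 * g 0 = 1 * g 0 := by rw [one_mul]; exact h0.symm
    exact mul_right_cancel₀ hg0 h2
  have hmone : ∀ x : ℚ_[p], ‖x‖ ≤ 1 → m₀ x = 1 := fun x hx => (hmconst x hx).trans hm0one
  intro ξ
  set f : ℕ → ℂ := fun j => m₀ (ξ * (p : ℚ_[p]) ^ ((j : ℤ) + 1 - (s : ℤ))) with hfdef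
  -- pick z with ‖ξ‖ ≤ p^z
  obtain ⟨z, hz⟩ : ∃ z : ℤ, ‖ξ‖ ≤ (p : ℝ) ^ z := by
    rcases eq_or_ne ξ 0 with h | h
    · exact ⟨0, by simp [h]⟩
    · exact ⟨-ξ.valuation, le_of_eq (Padic.norm_eq_zpow_neg_valuation h)⟩
  set N : ℕ := (z + s).toNat with hN
  have hNz : z + (s : ℤ) ≤ (N : ℤ) := Int.self_le_toNat (z + s)
  have hfone : ∀ j : ℕ, N ≤ j → f j = 1 := by
    intro j hj
    have hzj : -((j : ℤ) + 1 - (s : ℤ)) ≤ -z := by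
      have : (N : ℤ) ≤ (j : ℤ) := Int.ofNat_le.mpr hj
      omega
    apply hmone
    calc ‖ξ * (p : ℚ_[p]) ^ ((j : ℤ) + 1 - (s : ℤ))‖
        = ‖ξ‖ * (p : ℝ) ^ (-((j : ℤ) + 1 - (s : ℤ))) := by
          rw [norm_mul, Padic.norm_p_zpow]
      _ ≤ (p : ℝ) ^ z * (p : ℝ) ^ (-z) := by
          refine mul_le_mul hz ?_ (by positivity) (by positivity)
          exact zpow_le_zpow_right₀ hpR hzj
      _ = 1 := by
          rw [← zpow_add₀ (by positivity : (p:ℝ) ≠ 0)]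
          simp
  -- iterated refinement identity
  have hiter : ∀ n : ℕ,
      g ξ = (∏ j ∈ Finset.range n, f j) * g ((p : ℚ_[p]) ^ n * ξ) := by
    intro n
    induction n with
    | zero => simp
    | succ n ih =>
      rw [ih, hg ((p : ℚ_[p]) ^ n * ξ)]
      have harg : (p : ℚ_[p]) ^ n * ξ * (p : ℚ_[p]) ^ (1 - (s : ℤ))
          = ξ * (p : ℚ_[p]) ^ ((n : ℤ) + 1 - (s : ℤ)) := by
        rw [show (n : ℤ) + 1 - (s : ℤ) = (n : ℤ) + (1 - (s : ℤ)) by ring,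
          zpow_add₀ hp0, zpow_natCast]
        ring
      have harg2 : (p : ℚ_[p]) * ((p : ℚ_[p]) ^ n * ξ) = (p : ℚ_[p]) ^ (n + 1) * ξ := by
        ring
      rw [harg, harg2, Finset.prod_range_succ]
      ring
  -- the partial products stabilize
  have hstab : ∀ n : ℕ, N ≤ n →
      (∏ j ∈ Finset.range n, f j) = ∏ j ∈ Finset.range N, f j := by
    intro n hn
    rw [← Finset.prod_range_mul_prod_Ico f hn]
    have : (∏ j ∈ Finset.Ico N n, f j) = 1 :=
      Finset.prod_eq_one fun j hj => hfone j (Finset.mem_Ico.mp hj).1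
    rw [this, mul_one]
  set L : ℂ := ∏ j ∈ Finset.range N, f j with hL
  -- limit of g (p^n ξ)
  have ht1 : Tendsto (fun n : ℕ => (p : ℚ_[p]) ^ n * ξ) atTop (nhds 0) := by
    have := (tendsto_pow_atTop_nhds_zero_of_norm_lt_one
      (Padic.norm_p_lt_one (p := p))).mul_const ξ
    simpa using this
  have ht2 : Tendsto (fun n : ℕ => g ((p : ℚ_[p]) ^ n * ξ)) atTop (nhds (g 0)) :=
    (hcont.tendsto).comp ht1
  have ht3 : Tendsto (fun n : ℕ => L * g ((p : ℚ_[p]) ^ n * ξ)) atTop (nhds (L * g 0)) :=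
    tendsto_const_nhds.mul ht2
  have heq : (fun _ : ℕ => g ξ) =ᶠ[atTop] fun n : ℕ => L * g ((p : ℚ_[p]) ^ n * ξ) := by
    filter_upwards [eventually_ge_atTop N] with n hn
    rw [hiter n, hstab n hn]
  have hgξ : g ξ = L * g 0 :=
    tendsto_nhds_unique tendsto_const_nhds (ht3.congr' heq.symm)
  constructor
  · exact eventually_atTop.mpr ⟨N, hfone⟩
  · have htp : (∏' j : ℕ, f j) = L :=
      tprod_eq_prod fun j hj => hfone j (le_of_not_gt fun h => hj (Finset.mem_range.mpr h))
    rw [show (∏' j : ℕ, m₀ (ξ * (p : ℚ_[p]) ^ ((j : ℤ) + 1 - (s : ℤ)))) = ∏' j : ℕ, f j from rfl,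
      htp, hgξ]
    ring

end
end

section
/- Let s ≥ 1 be an integer and m_0(ξ) = (1/p) Σ_{k=0}^{p^s−1} β_k χ_p(kξ) a trigonometric polynomial with m_0(0) = 1, and define g(ξ) = ∏_{j=1}^{∞} m_0(ξ/p^{s−j}) (for each ξ all but finitely many factors equal 1). Then g is locally constant with constancy radius p^{1−s}: g(x+y) = g(x) for every x ∈ ℚ_p and every y ∈ ℚ_p with |y|_p ≤ p^{1−s}. -/
open Filter

noncomputable section

variable {p : ℕ} [Fact p.Prime]

lemma aux_norm_le (x : ℚ_[p]) : ‖x * (p : ℚ_[p]) ^ ((-x.valuation).toNat)‖ ≤ 1 := by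
  rcases eq_or_ne x 0 with rfl | hx
  · simp
  · have hp1 : (1:ℝ) < p := by exact_mod_cast (Fact.out : p.Prime).one_lt
    rw [norm_mul, norm_pow, Padic.norm_p, Padic.norm_eq_zpow_neg_valuation hx]
    rw [← zpow_natCast ((p:ℝ)⁻¹), inv_zpow, ← zpow_neg, ← zpow_add₀ (by positivity : (p:ℝ) ≠ 0)]
    calc (p:ℝ) ^ (-x.valuation + -((-x.valuation).toNat : ℤ)) ≤ (p:ℝ) ^ (0:ℤ) := by
          apply zpow_le_zpow_right₀ (le_of_lt hp1)
          have := Int.self_le_toNat (-x.valuation)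
          omega
      _ = 1 := zpow_zero _

lemma padicFrac_exists (x : ℚ_[p]) : ∃ (n : ℤ) (N : ℕ), padicFrac x = n / (p:ℚ) ^ N := by
  unfold padicFrac
  refine ⟨((PadicInt.appr (⟨x * (p : ℚ_[p]) ^ ((-x.valuation).toNat), aux_norm_le x⟩ : ℤ_[p])
    ((-x.valuation).toNat) : ℤ)), (-x.valuation).toNat, ?_⟩
  rw [dif_pos (aux_norm_le x)]
  push_cast
  ring

lemma padicFrac_norm_le (x : ℚ_[p]) : ‖x - ((padicFrac x : ℚ) : ℚ_[p])‖ ≤ 1 := by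
  unfold padicFrac
  rw [dif_pos (aux_norm_le x)]
  set γ := (-x.valuation).toNat
  set z : ℤ_[p] := ⟨x * (p : ℚ_[p]) ^ γ, aux_norm_le x⟩
  have hspec : z - (PadicInt.appr z γ : ℤ_[p]) ∈ Ideal.span {(p : ℤ_[p]) ^ γ} :=
    PadicInt.appr_spec γ z
  have hnorm : ‖z - (PadicInt.appr z γ : ℤ_[p])‖ ≤ (p:ℝ) ^ (-(γ:ℤ)) :=
    (PadicInt.norm_le_pow_iff_mem_span_pow _ γ).2 hspec
  have hp0 : (p:ℚ_[p]) ≠ 0 := by exact_mod_cast (Fact.out : p.Prime).ne_zero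
  have key : x - (((PadicInt.appr z γ : ℚ) / (p:ℚ) ^ γ : ℚ) : ℚ_[p])
      = ((z : ℚ_[p]) - (PadicInt.appr z γ : ℚ_[p])) / (p:ℚ_[p]) ^ γ := by
    have hz : (z : ℚ_[p]) = x * (p : ℚ_[p]) ^ γ := rfl
    rw [hz]
    push_cast
    field_simp
  rw [key, norm_div, norm_pow, Padic.norm_p, div_eq_mul_inv, inv_pow, inv_inv]
  have h2 : ‖(z : ℚ_[p]) - (PadicInt.appr z γ : ℚ_[p])‖ ≤ (p:ℝ) ^ (-(γ:ℤ)) := by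
    have : ((z - (PadicInt.appr z γ : ℤ_[p]) : ℤ_[p]) : ℚ_[p]) = (z : ℚ_[p]) - (PadicInt.appr z γ : ℚ_[p]) := by
      push_cast; ring
    rw [← this]
    simpa [PadicInt.norm_def] using hnorm
  have hppos : (0:ℝ) < p := by exact_mod_cast (Fact.out : p.Prime).pos
  calc ‖(z : ℚ_[p]) - (PadicInt.appr z γ : ℚ_[p])‖ * (p:ℝ) ^ γ
      ≤ (p:ℝ) ^ (-(γ:ℤ)) * (p:ℝ) ^ γ := by
        apply mul_le_mul_of_nonneg_right h2 (by positivity)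
    _ ≤ 1 := by
        rw [← zpow_natCast ((p:ℝ)) γ, ← zpow_add₀ (ne_of_gt hppos)]
        simp

lemma padicChar_add_of_norm_le_one (u v : ℚ_[p]) (hv : ‖v‖ ≤ 1) :
    padicChar (u + v) = padicChar u := by
  obtain ⟨n1, N1, h1⟩ := padicFrac_exists (u + v)
  obtain ⟨n2, N2, h2⟩ := padicFrac_exists u
  set q : ℚ := padicFrac (u + v) - padicFrac u with hq_def
  have hppos : (0:ℚ) < p := by exact_mod_cast (Fact.out : p.Prime).pos
  have hpQ : (p:ℚ) ≠ 0 := ne_of_gt hppos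
  have hqnorm : ‖((q : ℚ) : ℚ_[p])‖ ≤ 1 := by
    have e : ((q : ℚ) : ℚ_[p]) =
        -(((u+v) - (padicFrac (u+v) : ℚ_[p]))) + ((u - (padicFrac u : ℚ_[p]))) + v := by
      push_cast [hq_def]; ring
    rw [e]
    refine le_trans (Padic.nonarchimedean _ _) (max_le (le_trans (Padic.nonarchimedean _ _) (max_le ?_ ?_)) hv)
    · simpa only [norm_neg] using padicFrac_norm_le (u+v)
    · exact padicFrac_norm_le u
  have hqform : q = (n1 * (p:ℤ)^N2 - n2 * (p:ℤ)^N1 : ℤ) / (p:ℚ) ^ (N1 + N2) := by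
    rw [hq_def, h1, h2]
    field_simp
    push_cast
    ring
  set n : ℤ := n1 * (p:ℤ)^N2 - n2 * (p:ℤ)^N1
  set N : ℕ := N1 + N2
  have hdvd : ((p:ℤ) ^ N) ∣ n := by
    rw [← Padic.norm_int_le_pow_iff_dvd]
    have : ((n : ℚ) : ℚ_[p]) = ((q : ℚ) : ℚ_[p]) * (p:ℚ_[p]) ^ N := by
      rw [hqform]; push_cast [hpQ]; field_simp [show (p:ℚ_[p]) ≠ 0 by exact_mod_cast (Fact.out : p.Prime).ne_zero]
    have e2 : ((n : ℤ) : ℚ_[p]) = ((q : ℚ) : ℚ_[p]) * (p:ℚ_[p]) ^ N := by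
      rw [← this]; push_cast; ring
    rw [e2, norm_mul, norm_pow, Padic.norm_p]
    calc ‖((q:ℚ) : ℚ_[p])‖ * ((p:ℝ)⁻¹) ^ N ≤ 1 * ((p:ℝ)⁻¹) ^ N := by
          apply mul_le_mul_of_nonneg_right hqnorm (by positivity)
      _ = (p:ℝ) ^ (-(N:ℤ)) := by
          rw [one_mul, inv_pow, ← zpow_natCast ((p:ℝ)) N, ← zpow_neg]
  obtain ⟨m, hm⟩ := hdvd
  have hqm : q = (m : ℚ) := by
    rw [hqform, hm]
    push_cast
    field_simp
  have hfrac : padicFrac (u + v) = padicFrac u + m := by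
    have := hq_def
    rw [hqm] at this
    linarith [this]
  unfold padicChar
  rw [hfrac]
  push_cast
  rw [mul_add, Complex.exp_add]
  have : Complex.exp (2 * Real.pi * Complex.I * m) = 1 := by
    have := Complex.exp_int_mul_two_pi_mul_I m
    rw [← this]
    ring_nf
  rw [this, mul_one]

set_option maxHeartbeats 1000000 in
/-- Let `m_0(ξ) = (1/p) Σ_{k=0}^{p^s−1} β_k χ_p(kξ)` with `m_0(0) = 1`, and let
`g(ξ) = ∏_{j=1}^{∞} m_0(ξ/p^{s−j})`. Then `g` is locally constant with constancy radius
`p^{1−s}`: `g(x+y) = g(x)` for all `x, y ∈ ℚ_p` with `|y|_p ≤ p^{1−s}`. -/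
theorem padic_infinite_product_locally_constant
    (s : ℕ) (hs : 1 ≤ s) (β : ℕ → ℂ) (m₀ g : ℚ_[p] → ℂ)
    (hm₀ : ∀ ξ : ℚ_[p],
      m₀ ξ = (1 / (p : ℂ)) * ∑ k ∈ Finset.range (p ^ s), β k * padicChar ((k : ℚ_[p]) * ξ))
    (hm₀0 : m₀ 0 = 1)
    (hg : ∀ ξ : ℚ_[p], g ξ = ∏' j : ℕ, m₀ (ξ * (p : ℚ_[p]) ^ ((j : ℤ) + 1 - (s : ℤ)))) :
    ∀ x y : ℚ_[p], ‖y‖ ≤ (p : ℝ) ^ (1 - (s : ℤ)) → g (x + y) = g x := by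
  intro x y hy
  rw [hg, hg]
  apply tprod_congr
  intro j
  rw [hm₀, hm₀]
  congr 1
  apply Finset.sum_congr rfl
  intro k _
  congr 1
  have key : (k : ℚ_[p]) * ((x + y) * (p : ℚ_[p]) ^ ((j : ℤ) + 1 - (s : ℤ)))
      = (k : ℚ_[p]) * (x * (p : ℚ_[p]) ^ ((j : ℤ) + 1 - (s : ℤ)))
        + (k : ℚ_[p]) * y * (p : ℚ_[p]) ^ ((j : ℤ) + 1 - (s : ℤ)) := by ring
  rw [key]
  apply padicChar_add_of_norm_le_one
  have hppos : (0:ℝ) < p := by exact_mod_cast (Fact.out : p.Prime).pos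
  have hp1 : (1:ℝ) ≤ p := by exact_mod_cast (Fact.out : p.Prime).one_le
  have hk : ‖(k : ℚ_[p])‖ ≤ 1 := by
    have := Padic.norm_int_le_one (p := p) (k : ℤ)
    simpa using this
  have hz : ‖(p : ℚ_[p]) ^ ((j : ℤ) + 1 - (s : ℤ))‖ = (p:ℝ) ^ (-((j : ℤ) + 1 - (s : ℤ))) := by
    rw [norm_zpow, Padic.norm_p, inv_zpow, ← zpow_neg]
  calc ‖(k : ℚ_[p]) * y * (p : ℚ_[p]) ^ ((j : ℤ) + 1 - (s : ℤ))‖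
      = ‖(k : ℚ_[p])‖ * ‖y‖ * ‖(p : ℚ_[p]) ^ ((j : ℤ) + 1 - (s : ℤ))‖ := by
        rw [norm_mul, norm_mul]
    _ ≤ 1 * ((p:ℝ) ^ (1 - (s:ℤ))) * ((p:ℝ) ^ (-((j : ℤ) + 1 - (s : ℤ)))) := by
        rw [hz]
        apply mul_le_mul_of_nonneg_right _ (by positivity)
        exact mul_le_mul hk hy (norm_nonneg _) zero_le_one
    _ = (p:ℝ) ^ (-(j:ℤ)) := by
        rw [one_mul, ← zpow_add₀ (ne_of_gt hppos)]
        ring_nf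
    _ ≤ 1 := by
        rw [← zpow_zero (p:ℝ)]
        apply zpow_le_zpow_right₀ hp1
        omega

end
end

section
/- Let s ≥ 1 be an integer and m_0(ξ) = (1/p) Σ_{k=0}^{p^s−1} β_k χ_p(kξ) a trigonometric polynomial with m_0(0) = 1, and define g(ξ) = ∏_{j=1}^{∞} m_0(ξ/p^{s−j}) (for each ξ all but finitely many factors equal 1). If m_0(k/p^s) = 0 for every integer k ∈ {1,…,p^s−1} that is not divisible by p, then g(ξ) = 0 for every ξ ∈ ℚ_p with |ξ|_p > 1; consequently g is a bounded function supported in the unit ball and hence g ∈ L²(ℚ_p). -/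
open MeasureTheory Metric

noncomputable section

variable {p : ℕ} [Fact p.Prime]

instance : MeasurableSpace ℚ_[p] := borel _
instance : BorelSpace ℚ_[p] := ⟨rfl⟩

lemma padicFrac_eval (x : ℚ_[p]) (h : ‖x * (p : ℚ_[p]) ^ (-x.valuation).toNat‖ ≤ 1) :
    padicFrac x =
      (PadicInt.appr (⟨x * (p : ℚ_[p]) ^ (-x.valuation).toNat, h⟩ : ℤ_[p])
        (-x.valuation).toNat : ℚ) / (p : ℚ) ^ (-x.valuation).toNat := by
  unfold padicFrac
  rw [dif_pos h]

lemma padicFrac_of_norm_le_one {x : ℚ_[p]} (hx : ‖x‖ ≤ 1) : padicFrac x = 0 := by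
  have hγ : (-x.valuation).toNat = 0 :=
    Int.toNat_eq_zero.2 (neg_nonpos.2 ((Padic.norm_le_one_iff_val_nonneg x).1 hx))
  have h : ‖x * (p : ℚ_[p]) ^ (-x.valuation).toNat‖ ≤ 1 := by
    rw [hγ]; simpa using hx
  rw [padicFrac_eval x h]
  have : PadicInt.appr (⟨x * (p : ℚ_[p]) ^ (-x.valuation).toNat, h⟩ : ℤ_[p])
      (-x.valuation).toNat = 0 := by
    generalize (⟨x * (p : ℚ_[p]) ^ (-x.valuation).toNat, h⟩ : ℤ_[p]) = z
    rw [hγ]; rfl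
  rw [this]
  simp

lemma appr_sub_dvd (n : ℕ) (z z' : ℤ_[p]) (h : ‖z - z'‖ ≤ (p : ℝ) ^ (-(n : ℤ))) :
    (p : ℤ) ^ n ∣ (PadicInt.appr z n : ℤ) - (PadicInt.appr z' n : ℤ) := by
  rw [← PadicInt.norm_int_le_pow_iff_dvd]
  have h1 : ‖z - (PadicInt.appr z n : ℤ_[p])‖ ≤ (p : ℝ) ^ (-(n : ℤ)) :=
    (PadicInt.norm_le_pow_iff_mem_span_pow _ n).2 (PadicInt.appr_spec n z)
  have h2 : ‖z' - (PadicInt.appr z' n : ℤ_[p])‖ ≤ (p : ℝ) ^ (-(n : ℤ)) :=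
    (PadicInt.norm_le_pow_iff_mem_span_pow _ n).2 (PadicInt.appr_spec n z')
  have key : (((PadicInt.appr z n : ℤ) - (PadicInt.appr z' n : ℤ) : ℤ) : ℤ_[p]) =
      -(z - (PadicInt.appr z n : ℤ_[p])) + (z - z') + (z' - (PadicInt.appr z' n : ℤ_[p])) := by
    push_cast; ring
  rw [key]
  refine le_trans (PadicInt.nonarchimedean _ _) (max_le ?_ h2)
  refine le_trans (PadicInt.nonarchimedean _ _) (max_le ?_ h)
  rw [norm_neg]; exact h1

lemma padicChar_congr {x y : ℚ_[p]} (h : ‖y - x‖ ≤ 1) : padicChar y = padicChar x := by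
  have hp1 : (1 : ℝ) < p := by exact_mod_cast (Fact.out : p.Prime).one_lt
  rcases le_or_gt ‖x‖ 1 with hx | hx
  · have hy : ‖y‖ ≤ 1 := by
      have h2 : ‖(y - x) + x‖ ≤ max ‖y - x‖ ‖x‖ := Padic.nonarchimedean _ _
      rw [sub_add_cancel] at h2
      exact h2.trans (max_le h hx)
    unfold padicChar
    rw [padicFrac_of_norm_le_one hx, padicFrac_of_norm_le_one hy]
  · have hx0 : x ≠ 0 := by rintro rfl; rw [norm_zero] at hx; linarith
    have hyx : ‖y‖ = ‖x‖ := by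
      have hne : ‖x‖ ≠ ‖y - x‖ := (ne_of_gt (lt_of_le_of_lt h hx))
      have h2 := Padic.add_eq_max_of_ne (p := p) hne
      rw [add_sub_cancel] at h2
      rw [h2, max_eq_left (le_of_lt (lt_of_le_of_lt h hx))]
    have hy0 : y ≠ 0 := by
      rintro rfl; rw [norm_zero] at hyx; exact absurd hyx.symm (ne_of_gt (lt_trans one_pos hx))
    have hval : y.valuation = x.valuation := by
      have h1 := Padic.norm_eq_zpow_neg_valuation hx0
      have h2 := Padic.norm_eq_zpow_neg_valuation hy0
      have h3 : (p : ℝ) ^ (-y.valuation) = (p : ℝ) ^ (-x.valuation) := by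
        rw [← h1, ← h2, hyx]
      have h4 := zpow_right_injective₀ (lt_trans one_pos hp1) (ne_of_gt hp1) h3
      omega
    have hvneg : 0 < -x.valuation := by
      by_contra hcon
      push_neg at hcon
      have h5 : (p : ℝ) ^ (-x.valuation) ≤ 1 := zpow_le_one_of_nonpos₀ (le_of_lt hp1) hcon
      rw [← Padic.norm_eq_zpow_neg_valuation hx0] at h5
      exact absurd h5 (not_le.2 hx)
    have hγ : (((-x.valuation).toNat : ℤ)) = -x.valuation := Int.toNat_of_nonneg hvneg.le
    have hpne : (p : ℝ) ≠ 0 := by positivity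
    have hxc : ‖x * (p : ℚ_[p]) ^ (-x.valuation).toNat‖ ≤ 1 := by
      rw [norm_mul, Padic.norm_p_pow, Padic.norm_eq_zpow_neg_valuation hx0, ← zpow_add₀ hpne]
      rw [show (-x.valuation + -(((-x.valuation).toNat : ℤ))) = 0 by omega]
      simp
    have hyc' : ‖y * (p : ℚ_[p]) ^ (-y.valuation).toNat‖ ≤ 1 := by
      rw [norm_mul, Padic.norm_p_pow, Padic.norm_eq_zpow_neg_valuation hy0, hval, ← zpow_add₀ hpne]
      rw [show (-x.valuation + -(((-x.valuation).toNat : ℤ))) = 0 by omega]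
      simp
    have hyc : ‖y * (p : ℚ_[p]) ^ (-x.valuation).toNat‖ ≤ 1 := by
      rw [hval] at hyc'; exact hyc'
    have hfx := padicFrac_eval x hxc
    have hfy : padicFrac y =
        (PadicInt.appr (⟨y * (p : ℚ_[p]) ^ (-x.valuation).toNat, hyc⟩ : ℤ_[p])
          (-x.valuation).toNat : ℚ) / (p : ℚ) ^ (-x.valuation).toNat := by
      have h6 := padicFrac_eval y hyc'
      simp only [hval] at h6
      exact h6
    obtain ⟨c, hc⟩ := appr_sub_dvd ((-x.valuation).toNat)
      (⟨y * (p : ℚ_[p]) ^ (-x.valuation).toNat, hyc⟩ : ℤ_[p])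
      (⟨x * (p : ℚ_[p]) ^ (-x.valuation).toNat, hxc⟩ : ℤ_[p])
      (by
        rw [PadicInt.norm_def]
        show ‖y * (p : ℚ_[p]) ^ (-x.valuation).toNat - x * (p : ℚ_[p]) ^ (-x.valuation).toNat‖ ≤ _
        rw [← sub_mul, norm_mul, Padic.norm_p_pow]
        calc ‖y - x‖ * (p : ℝ) ^ (-(((-x.valuation).toNat : ℤ)))
            ≤ 1 * (p : ℝ) ^ (-(((-x.valuation).toNat : ℤ))) := by
              apply mul_le_mul_of_nonneg_right h (by positivity)
          _ = (p : ℝ) ^ (-(((-x.valuation).toNat : ℤ))) := by rw [one_mul])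
    have hppos : (0 : ℚ) < (p : ℚ) ^ (-x.valuation).toNat := by
      have : (0 : ℚ) < (p : ℚ) := by exact_mod_cast (Fact.out : p.Prime).pos
      positivity
    have hfrac : (padicFrac y : ℚ) - padicFrac x = (c : ℚ) := by
      rw [hfx, hfy, div_sub_div_same, div_eq_iff (ne_of_gt hppos)]
      have h7 := congrArg (fun t : ℤ => (t : ℚ)) hc
      push_cast at h7
      linarith [h7]
    unfold padicChar
    have hcc : (padicFrac y : ℂ) = (padicFrac x : ℂ) + (c : ℂ) := by
      have h8 := congrArg (fun q : ℚ => (q : ℂ)) hfrac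
      push_cast at h8
      linear_combination h8
    rw [hcc, mul_add, Complex.exp_add,
      show 2 * (Real.pi : ℂ) * Complex.I * (c : ℂ) = (c : ℂ) * (2 * Real.pi * Complex.I) by ring,
      Complex.exp_int_mul_two_pi_mul_I, mul_one]

lemma continuous_padicChar : Continuous (padicChar (p := p)) := by
  apply IsLocallyConstant.continuous
  rw [IsLocallyConstant.iff_eventually_eq]
  intro x
  filter_upwards [Metric.ball_mem_nhds x one_pos] with y hy
  exact padicChar_congr (le_of_lt (by simpa [dist_eq_norm] using hy))

lemma norm_padicChar (x : ℚ_[p]) : ‖padicChar x‖ = 1 := by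
  unfold padicChar
  rw [Complex.norm_exp]
  have h0 : (2 * (Real.pi : ℂ) * Complex.I * ((padicFrac x : ℚ) : ℂ)).re = 0 := by
    simp
  rw [h0, Real.exp_zero]

lemma tprod_eq_zero_of_eq_zero {f : ℕ → ℂ} (j : ℕ) (h : f j = 0) : ∏' i, f i = 0 := by
  have hP : HasProd f 0 := by
    rw [HasProd]
    have hev : ∀ᶠ F in (Filter.atTop : Filter (Finset ℕ)), ∏ i ∈ F, f i = 0 := by
      filter_upwards [Filter.eventually_ge_atTop ({j} : Finset ℕ)] with F hF
      exact Finset.prod_eq_zero (hF (Finset.mem_singleton_self j)) h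
    exact Filter.Tendsto.congr' (Filter.EventuallyEq.symm hev) tendsto_const_nhds
  exact hP.tprod_eq

/-- Let `m_0(ξ) = (1/p) Σ_{k=0}^{p^s−1} β_k χ_p(kξ)` with `m_0(0) = 1`, and let
`g(ξ) = ∏_{j=1}^{∞} m_0(ξ/p^{s−j})`. If `m_0(k/p^s) = 0` for every `k ∈ {1,…,p^s−1}`
not divisible by `p`, then `g(ξ) = 0` whenever `|ξ|_p > 1`; consequently `g` is a bounded
function supported in the unit ball and hence `g ∈ L²(ℚ_p)` (`μ` the normalized Haar
measure). -/
theorem padic_infinite_product_support_in_unit_ball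
    (μ : Measure ℚ_[p]) [μ.IsAddHaarMeasure] (hμ : μ (closedBall 0 1) = 1)
    (s : ℕ) (hs : 1 ≤ s) (β : ℕ → ℂ) (m₀ g : ℚ_[p] → ℂ)
    (hm₀ : ∀ ξ : ℚ_[p],
      m₀ ξ = (1 / (p : ℂ)) * ∑ k ∈ Finset.range (p ^ s), β k * padicChar ((k : ℚ_[p]) * ξ))
    (hm₀0 : m₀ 0 = 1)
    (hg : ∀ ξ : ℚ_[p], g ξ = ∏' j : ℕ, m₀ (ξ * (p : ℚ_[p]) ^ ((j : ℤ) + 1 - (s : ℤ))))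
    (hvanish : ∀ k : ℕ, 0 < k → k < p ^ s → ¬ p ∣ k →
      m₀ ((k : ℚ_[p]) / (p : ℚ_[p]) ^ s) = 0) :
    (∀ ξ : ℚ_[p], 1 < ‖ξ‖ → g ξ = 0) ∧
      (∃ C : ℝ, ∀ ξ : ℚ_[p], ‖g ξ‖ ≤ C) ∧
      Function.support g ⊆ closedBall 0 1 ∧
      MemLp g 2 μ := by
  have hp1 : (1 : ℝ) < p := by exact_mod_cast (Fact.out : p.Prime).one_lt
  have hpne : (p : ℝ) ≠ 0 := by positivity
  -- m₀ is invariant under translation by integers (distance ≤ 1)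
  have hm₀congr : ∀ η η' : ℚ_[p], ‖η - η'‖ ≤ 1 → m₀ η = m₀ η' := by
    intro η η' hd
    rw [hm₀ η, hm₀ η']
    congr 1
    apply Finset.sum_congr rfl
    intro k _
    congr 1
    apply padicChar_congr
    rw [← mul_sub]
    calc ‖(k : ℚ_[p]) * (η - η')‖ = ‖(k : ℚ_[p])‖ * ‖η - η'‖ := norm_mul _ _
      _ ≤ 1 * 1 := by
          apply mul_le_mul _ hd (norm_nonneg _) zero_le_one
          exact_mod_cast Padic.norm_int_le_one ((k : ℤ))
      _ = 1 := one_mul 1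
  -- m₀ equals 1 on the unit ball
  have hm₀one : ∀ η : ℚ_[p], ‖η‖ ≤ 1 → m₀ η = 1 := by
    intro η hη
    rw [hm₀congr η 0 (by simpa using hη)]
    exact hm₀0
  -- m₀ vanishes on the sphere of radius p^s
  have hm₀zero : ∀ η : ℚ_[p], ‖η‖ = (p : ℝ) ^ (s : ℤ) → m₀ η = 0 := by
    intro η hη
    have hz : ‖η * (p : ℚ_[p]) ^ s‖ ≤ 1 := by
      rw [norm_mul, Padic.norm_p_pow, hη, ← zpow_add₀ hpne]
      simp
    set z : ℤ_[p] := ⟨η * (p : ℚ_[p]) ^ s, hz⟩ with hzdef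
    set a : ℕ := PadicInt.appr z s with hadef
    have ha_lt : a < p ^ s := PadicInt.appr_lt z s
    have hza : ‖z - (a : ℤ_[p])‖ ≤ (p : ℝ) ^ (-(s : ℤ)) :=
      (PadicInt.norm_le_pow_iff_mem_span_pow _ s).2 (PadicInt.appr_spec s z)
    have hznorm : ‖z‖ = 1 := by
      rw [PadicInt.norm_def]
      show ‖η * (p : ℚ_[p]) ^ s‖ = 1
      rw [norm_mul, Padic.norm_p_pow, hη, ← zpow_add₀ hpne]
      simp
    have hpa : ¬ p ∣ a := by
      intro hdvd
      have h1 : ‖((a : ℤ) : ℤ_[p])‖ ≤ (p : ℝ) ^ (-(1 : ℕ) : ℤ) := by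
        rw [PadicInt.norm_int_le_pow_iff_dvd, pow_one]
        exact Int.natCast_dvd_natCast.2 hdvd
      have h2 : ‖z‖ ≤ max ‖z - ((a : ℤ) : ℤ_[p])‖ ‖((a : ℤ) : ℤ_[p])‖ := by
        have h2' := PadicInt.nonarchimedean (z - ((a : ℤ) : ℤ_[p])) ((a : ℤ) : ℤ_[p])
        rw [sub_add_cancel] at h2'
        exact h2'
      rw [hznorm] at h2
      have hza' : ‖z - ((a : ℤ) : ℤ_[p])‖ ≤ (p : ℝ) ^ (-(s : ℤ)) := by
        have : ((a : ℤ) : ℤ_[p]) = ((a : ℕ) : ℤ_[p]) := by push_cast; rfl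
        rw [this]; exact hza
      have h3 : (1 : ℝ) ≤ max ((p : ℝ) ^ (-(s : ℤ))) ((p : ℝ) ^ (-(1 : ℕ) : ℤ)) :=
        le_trans h2 (max_le_max hza' h1)
      have h4 : ((p : ℝ) ^ (-(s : ℤ))) < 1 := by
        apply zpow_lt_one_of_neg₀ hp1; omega
      have h5 : ((p : ℝ) ^ (-(1 : ℕ) : ℤ)) < 1 := by
        apply zpow_lt_one_of_neg₀ hp1; omega
      rcases max_cases ((p : ℝ) ^ (-(s : ℤ))) ((p : ℝ) ^ (-(1 : ℕ) : ℤ)) with ⟨he, _⟩ | ⟨he, _⟩ <;>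
        rw [he] at h3 <;> linarith
    have ha_pos : 0 < a := Nat.pos_of_ne_zero (fun h0 => hpa (by rw [h0]; exact dvd_zero p))
    have hclose : ‖η - (a : ℚ_[p]) / (p : ℚ_[p]) ^ s‖ ≤ 1 := by
      have hps : (p : ℚ_[p]) ^ s ≠ 0 := by
        apply pow_ne_zero
        exact_mod_cast (Fact.out : p.Prime).ne_zero
      have heq : η - (a : ℚ_[p]) / (p : ℚ_[p]) ^ s =
          (η * (p : ℚ_[p]) ^ s - (a : ℚ_[p])) / (p : ℚ_[p]) ^ s := by
        field_simp
      rw [heq, norm_div, Padic.norm_p_pow]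
      have hnum : ‖η * (p : ℚ_[p]) ^ s - (a : ℚ_[p])‖ ≤ (p : ℝ) ^ (-(s : ℤ)) := by
        have : ((z - (a : ℤ_[p]) : ℤ_[p]) : ℚ_[p]) = η * (p : ℚ_[p]) ^ s - (a : ℚ_[p]) := by
          push_cast [hzdef]
          rfl
        rw [← this, ← PadicInt.norm_def]
        exact hza
      have hpow : (0 : ℝ) < (p : ℝ) ^ (-(s : ℤ)) := by positivity
      calc ‖η * (p : ℚ_[p]) ^ s - (a : ℚ_[p])‖ / (p : ℝ) ^ (-(s : ℤ))
          ≤ (p : ℝ) ^ (-(s : ℤ)) / (p : ℝ) ^ (-(s : ℤ)) := by gcongr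
        _ = 1 := div_self (ne_of_gt hpow)
    rw [hm₀congr η ((a : ℚ_[p]) / (p : ℚ_[p]) ^ s) hclose]
    exact hvanish a ha_pos ha_lt hpa
  -- Part 1: vanishing outside the unit ball
  have hzero : ∀ ξ : ℚ_[p], 1 < ‖ξ‖ → g ξ = 0 := by
    intro ξ hξ
    have hξ0 : ξ ≠ 0 := by rintro rfl; rw [norm_zero] at hξ; linarith
    have hnorm : ‖ξ‖ = (p : ℝ) ^ (-ξ.valuation) := Padic.norm_eq_zpow_neg_valuation hξ0
    have hvneg : 0 < -ξ.valuation := by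
      by_contra hcon
      push_neg at hcon
      have h5 : (p : ℝ) ^ (-ξ.valuation) ≤ 1 := zpow_le_one_of_nonpos₀ (le_of_lt hp1) hcon
      rw [← hnorm] at h5; linarith
    set t : ℕ := (-ξ.valuation).toNat with htdef
    have ht : (t : ℤ) = -ξ.valuation := Int.toNat_of_nonneg hvneg.le
    have ht1 : 1 ≤ t := by omega
    rw [hg]
    apply tprod_eq_zero_of_eq_zero (t - 1)
    apply hm₀zero
    have hexp : ((t - 1 : ℕ) : ℤ) + 1 - (s : ℤ) = (t : ℤ) - s := by omega
    rw [hexp, norm_mul, Padic.norm_p_zpow, hnorm, ← ht, ← zpow_add₀ hpne]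
    congr 1
    omega
  -- finite product representation on the unit ball
  have hfin : ∀ ξ : ℚ_[p], ‖ξ‖ ≤ 1 →
      g ξ = ∏ j ∈ Finset.range s, m₀ (ξ * (p : ℚ_[p]) ^ ((j : ℤ) + 1 - (s : ℤ))) := by
    intro ξ hξ
    rw [hg]
    apply tprod_eq_prod
    intro j hj
    rw [Finset.mem_range, not_lt] at hj
    apply hm₀one
    rw [norm_mul, Padic.norm_p_zpow]
    have he : -((j : ℤ) + 1 - s) ≤ 0 := by omega
    have hle1 : (p : ℝ) ^ (-((j : ℤ) + 1 - s)) ≤ 1 := zpow_le_one_of_nonpos₀ (le_of_lt hp1) he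
    calc ‖ξ‖ * (p : ℝ) ^ (-((j : ℤ) + 1 - s)) ≤ 1 * 1 :=
          mul_le_mul hξ hle1 (by positivity) zero_le_one
      _ = 1 := one_mul 1
  -- boundedness
  set M : ℝ := ∑ k ∈ Finset.range (p ^ s), ‖β k‖ with hMdef
  have hm₀bound : ∀ η : ℚ_[p], ‖m₀ η‖ ≤ M := by
    intro η
    rw [hm₀ η]
    calc ‖(1 / (p : ℂ)) * ∑ k ∈ Finset.range (p ^ s), β k * padicChar ((k : ℚ_[p]) * η)‖
        = ‖(1 / (p : ℂ))‖ * ‖∑ k ∈ Finset.range (p ^ s), β k * padicChar ((k : ℚ_[p]) * η)‖ :=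
          norm_mul _ _
      _ ≤ 1 * M := by
          apply mul_le_mul ?_ ?_ (norm_nonneg _) zero_le_one
          · rw [norm_div, norm_one, Complex.norm_natCast]
            apply div_le_one_of_le₀ hp1.le (by positivity)
          · refine le_trans (norm_sum_le _ _) ?_
            apply Finset.sum_le_sum
            intro k _
            rw [norm_mul, norm_padicChar, mul_one]
      _ = M := one_mul M
  have hM1 : ∀ η : ℚ_[p], ‖m₀ η‖ ≤ max 1 M := fun η => (hm₀bound η).trans (le_max_right _ _)
  have hmax0 : (0 : ℝ) ≤ max 1 M := le_trans zero_le_one (le_max_left _ _)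
  have hbound : ∀ ξ : ℚ_[p], ‖g ξ‖ ≤ (max 1 M) ^ s := by
    intro ξ
    rcases le_or_gt ‖ξ‖ 1 with hξ | hξ
    · rw [hfin ξ hξ]
      calc ‖∏ j ∈ Finset.range s, m₀ (ξ * (p : ℚ_[p]) ^ ((j : ℤ) + 1 - (s : ℤ)))‖
          = ∏ j ∈ Finset.range s, ‖m₀ (ξ * (p : ℚ_[p]) ^ ((j : ℤ) + 1 - (s : ℤ)))‖ :=
            norm_prod _ _
        _ ≤ ∏ _j ∈ Finset.range s, (max 1 M) :=
            Finset.prod_le_prod (fun _ _ => norm_nonneg _) (fun j _ => hM1 _)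
        _ = (max 1 M) ^ s := by rw [Finset.prod_const, Finset.card_range]
    · rw [hzero ξ hξ, norm_zero]
      exact pow_nonneg hmax0 s
  -- support
  have hsupp : Function.support g ⊆ closedBall 0 1 := by
    intro ξ hξ
    rw [Function.mem_support] at hξ
    rw [mem_closedBall, dist_zero_right]
    by_contra hcon
    push_neg at hcon
    exact hξ (hzero ξ hcon)
  -- measurability and MemLp
  have hcont : Continuous (fun ξ : ℚ_[p] =>
      ∏ j ∈ Finset.range s, m₀ (ξ * (p : ℚ_[p]) ^ ((j : ℤ) + 1 - (s : ℤ)))) := by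
    apply continuous_finset_prod
    intro j _
    have hcm : Continuous m₀ := by
      have hfun : m₀ = fun ξ =>
          (1 / (p : ℂ)) * ∑ k ∈ Finset.range (p ^ s), β k * padicChar ((k : ℚ_[p]) * ξ) :=
        funext hm₀
      rw [hfun]
      apply Continuous.mul continuous_const
      apply continuous_finset_sum
      intro k _
      exact continuous_const.mul (continuous_padicChar.comp (continuous_mul_left _))
    exact hcm.comp (continuous_id.mul continuous_const)
  have hg_eq : g = (closedBall (0 : ℚ_[p]) 1).indicator (fun ξ =>
      ∏ j ∈ Finset.range s, m₀ (ξ * (p : ℚ_[p]) ^ ((j : ℤ) + 1 - (s : ℤ)))) := by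
    funext ξ
    rcases le_or_gt ‖ξ‖ 1 with hξ | hξ
    · rw [Set.indicator_of_mem (by rw [mem_closedBall, dist_zero_right]; exact hξ)]
      exact hfin ξ hξ
    · rw [Set.indicator_of_notMem (by rw [mem_closedBall, dist_zero_right]; exact not_le.2 hξ),
        hzero ξ hξ]
  have hmeas : Measurable g := by
    rw [hg_eq]
    exact (hcont.measurable).indicator measurableSet_closedBall
  have hindg : (closedBall (0 : ℚ_[p]) 1).indicator g = g := Set.indicator_eq_self.2 hsupp
  have hmem : MemLp g 2 μ := by
    rw [← hindg, memLp_indicator_iff_restrict measurableSet_closedBall]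
    haveI : IsFiniteMeasure (μ.restrict (closedBall (0 : ℚ_[p]) 1)) := by
      constructor
      rw [Measure.restrict_apply_univ, hμ]
      exact ENNReal.one_lt_top
    exact MemLp.of_bound (hmeas.aestronglyMeasurable.restrict) ((max 1 M) ^ s)
      (Filter.Eventually.of_forall hbound)
  exact ⟨hzero, ⟨(max 1 M) ^ s, hbound⟩, hsupp, hmem⟩

end
end

section
/- Let s ≥ 1 be an integer and m_0(ξ) = (1/p) Σ_{k=0}^{p^s−1} β_k χ_p(kξ) a trigonometric polynomial with m_0(0) = 1, and define g(ξ) = ∏_{j=1}^{∞} m_0(ξ/p^{s−j}) (for each ξ all but finitely many factors equal 1). Suppose m_0(k/p^s) = 0 for every integer k ∈ {1,…,p^s−1} not divisible by p, and |m_0(k/p^s)| = 1 for every integer k ∈ {1,…,p^s−1} divisible by p. Then |g(ξ)| = 1 for every ξ ∈ ℚ_p with |ξ|_p ≤ 1. -/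
noncomputable section

variable {p : ℕ} [Fact p.Prime]

lemma pcast_ne (x : ℚ_[p]) : (p : ℚ_[p]) ≠ 0 :=
  Nat.cast_ne_zero.2 (Fact.out (p := p.Prime)).pos.ne'

lemma val_p_pow (n : ℕ) : Padic.valuation ((p : ℚ_[p]) ^ n) = n := by
  induction n with
  | zero => simpa using Padic.valuation_one
  | succ n ih =>
      rw [pow_succ, Padic.valuation_mul (pow_ne_zero _ (pcast_ne 0)) (pcast_ne 0), ih,
        Padic.valuation_p]
      push_cast; ring

lemma frac_cond (x : ℚ_[p]) : ‖x * (p : ℚ_[p]) ^ (-x.valuation).toNat‖ ≤ 1 := by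
  rcases eq_or_ne x 0 with rfl | hx
  · simp
  · rw [Padic.norm_le_one_iff_val_nonneg,
      Padic.valuation_mul hx (pow_ne_zero _ (pcast_ne 0)), val_p_pow]
    omega

lemma padicFrac_spec (x : ℚ_[p]) :
    ∃ γ a : ℕ, a < p ^ γ ∧ padicFrac x = (a : ℚ) / (p : ℚ) ^ γ ∧
      ‖x - ((padicFrac x : ℚ) : ℚ_[p])‖ ≤ 1 := by
  have h := frac_cond x
  set γ : ℕ := (-x.valuation).toNat with hγ
  set z : ℤ_[p] := ⟨x * (p : ℚ_[p]) ^ γ, h⟩ with hz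
  have hfrac : padicFrac x = (z.appr γ : ℚ) / (p : ℚ) ^ γ := by
    rw [padicFrac]; exact dif_pos h
  refine ⟨γ, z.appr γ, PadicInt.appr_lt z γ, hfrac, ?_⟩
  have hspec : ‖z - (z.appr γ : ℤ_[p])‖ ≤ (p : ℝ) ^ (-(γ : ℤ)) := by
    rw [PadicInt.norm_le_pow_iff_mem_span_pow]
    exact PadicInt.appr_spec γ z
  have hnorm : ‖x * (p : ℚ_[p]) ^ γ - ((z.appr γ : ℕ) : ℚ_[p])‖ ≤ (p : ℝ) ^ (-(γ : ℤ)) := by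
    rw [PadicInt.norm_def, PadicInt.coe_sub, PadicInt.coe_natCast] at hspec; exact hspec
  have hcast : ((padicFrac x : ℚ) : ℚ_[p]) = ((z.appr γ : ℕ) : ℚ_[p]) / (p : ℚ_[p]) ^ γ := by
    rw [hfrac]; push_cast; ring
  have hne : (p : ℚ_[p]) ^ γ ≠ 0 := pow_ne_zero _ (pcast_ne 0)
  have hxeq : x - ((padicFrac x : ℚ) : ℚ_[p]) =
      (x * (p : ℚ_[p]) ^ γ - ((z.appr γ : ℕ) : ℚ_[p])) / (p : ℚ_[p]) ^ γ := by
    rw [hcast]; field_simp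
  rw [hxeq, norm_div]
  have hppow : ‖(p : ℚ_[p]) ^ γ‖ = (p : ℝ) ^ (-(γ : ℤ)) := by
    rw [norm_pow, Padic.norm_p, inv_pow, ← zpow_natCast, ← zpow_neg]
  rw [hppow]
  have hpreal : (0 : ℝ) < (p : ℝ) := by exact_mod_cast (Fact.out (p := p.Prime)).pos
  have hpos : (0 : ℝ) < (p : ℝ) ^ (-(γ : ℤ)) := zpow_pos hpreal _
  rw [div_le_one hpos]
  exact hnorm

lemma den_int (q : ℚ) (m : ℕ) (hden : (q.den : ℤ) ∣ (p : ℤ) ^ m)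
    (hnorm : ‖(q : ℚ_[p])‖ ≤ 1) : ∃ n : ℤ, q = n := by
  have hp := Fact.out (p := p.Prime)
  by_cases h1 : q.den = 1
  · exact ⟨q.num, by rw [← Rat.num_div_den q, h1]; simp⟩
  · exfalso
    have hdvd : q.den ∣ p ^ m := by exact_mod_cast hden
    obtain ⟨i, hi, hdeq⟩ := (Nat.dvd_prime_pow hp).mp hdvd
    have hipos : i ≠ 0 := by rintro rfl; simp at hdeq; exact h1 hdeq
    have hpd : p ∣ q.den := hdeq ▸ dvd_pow_self p hipos
    have h2 : ‖((q.den : ℤ) : ℚ_[p])‖ < 1 :=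
      (Padic.norm_intCast_lt_one_iff).2 (by exact_mod_cast Int.natCast_dvd_natCast.2 hpd)
    have hqnum : ((q.num : ℚ) : ℚ_[p]) = (q : ℚ_[p]) * ((q.den : ℚ) : ℚ_[p]) := by
      have hd0 : ((q.den : ℚ)) ≠ 0 := Nat.cast_ne_zero.2 q.den_nz
      have : (q.num : ℚ) = q * (q.den : ℚ) := by
        have h := (div_eq_iff hd0).mp (Rat.num_div_den q)
        linarith [h]
      rw [← Padic.coe_mul, ← this]
    have h3 : ‖((q.num : ℤ) : ℚ_[p])‖ < 1 := by
      have : ((q.num : ℤ) : ℚ_[p]) = ((q.num : ℚ) : ℚ_[p]) := by push_cast; ring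
      rw [this, hqnum, Padic.padicNormE.mul]
      calc ‖(q : ℚ_[p])‖ * ‖((q.den : ℚ) : ℚ_[p])‖ ≤ 1 * ‖((q.den : ℚ) : ℚ_[p])‖ := by
            apply mul_le_mul_of_nonneg_right hnorm (norm_nonneg _)
        _ = ‖((q.den : ℤ) : ℚ_[p])‖ := by rw [one_mul]; push_cast; ring_nf
        _ < 1 := h2
    have hpn : (p : ℤ) ∣ q.num := (Padic.norm_intCast_lt_one_iff).1 h3
    have hpg : p ∣ Nat.gcd q.num.natAbs q.den :=
      Nat.dvd_gcd (Int.natCast_dvd_natCast.mp (Int.dvd_natAbs.mpr hpn)) hpd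
    rw [q.reduced] at hpg
    exact hp.ne_one (Nat.eq_one_of_dvd_one hpg)

lemma padicChar_add_int (x y : ℚ_[p]) (hy : ‖y‖ ≤ 1) : padicChar (x + y) = padicChar x := by
  obtain ⟨γ₁, a₁, _, hq₁, hn₁⟩ := padicFrac_spec (x + y)
  obtain ⟨γ₂, a₂, _, hq₂, hn₂⟩ := padicFrac_spec x
  set q₁ := padicFrac (x + y) with hq1d
  set q₂ := padicFrac x with hq2d
  have hp' := Fact.out (p := p.Prime)
  have hppow : ((p : ℚ) ^ γ₁ : ℚ) ≠ 0 := pow_ne_zero _ (Nat.cast_ne_zero.2 hp'.pos.ne')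
  have hppow2 : ((p : ℚ) ^ γ₂ : ℚ) ≠ 0 := pow_ne_zero _ (Nat.cast_ne_zero.2 hp'.pos.ne')
  obtain ⟨n, hn⟩ : ∃ n : ℤ, q₁ - q₂ = n := by
    apply den_int (p := p) (q₁ - q₂) (γ₁ + γ₂)
    · have heq : q₁ - q₂ = Rat.divInt ((a₁ : ℤ) * (p : ℤ) ^ γ₂ - (a₂ : ℤ) * (p : ℤ) ^ γ₁)
          ((p : ℤ) ^ (γ₁ + γ₂)) := by
        have hp0 : (p : ℚ) ≠ 0 := Nat.cast_ne_zero.2 (Fact.out (p := p.Prime)).pos.ne'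
        rw [Rat.divInt_eq_div, hq₁, hq₂]
        push_cast
        rw [div_sub_div _ _ hppow hppow2, pow_add]
        congr 1
        ring
      rw [heq]
      exact Rat.den_dvd _ _
    · have heq2 : ((q₁ - q₂ : ℚ) : ℚ_[p]) =
          ((x - ((q₂ : ℚ) : ℚ_[p])) + -((x + y) - ((q₁ : ℚ) : ℚ_[p]))) + y := by
        push_cast
        ring
      rw [heq2]
      refine le_trans (Padic.nonarchimedean _ _) (max_le ?_ hy)
      refine le_trans (Padic.nonarchimedean _ _) (max_le hn₂ ?_)
      rw [norm_neg]
      exact hn₁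
  have hcast : (q₁ : ℂ) = (q₂ : ℂ) + (n : ℂ) := by
    have : q₁ = q₂ + (n : ℚ) := by linarith [hn]
    exact_mod_cast congrArg (fun t : ℚ => (t : ℂ)) this
  rw [padicChar, padicChar, ← hq1d, ← hq2d, hcast, mul_add, Complex.exp_add]
  have h1 : Complex.exp (2 * Real.pi * Complex.I * (n : ℂ)) = 1 := by
    rw [mul_comm]
    exact Complex.exp_int_mul_two_pi_mul_I n
  rw [h1, mul_one]

lemma padicFrac_zero : padicFrac (0 : ℚ_[p]) = 0 := by
  simp [padicFrac, PadicInt.appr]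

lemma padicChar_zero : padicChar (0 : ℚ_[p]) = 1 := by
  rw [padicChar, padicFrac_zero]
  simp

lemma padicChar_of_norm_le_one (x : ℚ_[p]) (h : ‖x‖ ≤ 1) : padicChar x = 1 := by
  have := padicChar_add_int (p := p) 0 x h
  rwa [zero_add, padicChar_zero] at this

/-- Let `m_0(ξ) = (1/p) Σ_{k=0}^{p^s−1} β_k χ_p(kξ)` with `m_0(0) = 1`, and let
`g(ξ) = ∏_{j=1}^{∞} m_0(ξ/p^{s−j})`. If `m_0(k/p^s) = 0` for every `k ∈ {1,…,p^s−1}`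
not divisible by `p`, and `|m_0(k/p^s)| = 1` for every `k ∈ {1,…,p^s−1}` divisible
by `p`, then `|g(ξ)| = 1` for every `ξ` with `|ξ|_p ≤ 1`. -/
theorem padic_infinite_product_unimodular_on_unit_ball
    (s : ℕ) (hs : 1 ≤ s) (β : ℕ → ℂ) (m₀ g : ℚ_[p] → ℂ)
    (hm₀ : ∀ ξ : ℚ_[p],
      m₀ ξ = (1 / (p : ℂ)) * ∑ k ∈ Finset.range (p ^ s), β k * padicChar ((k : ℚ_[p]) * ξ))
    (hm₀0 : m₀ 0 = 1)
    (hg : ∀ ξ : ℚ_[p], g ξ = ∏' j : ℕ, m₀ (ξ * (p : ℚ_[p]) ^ ((j : ℤ) + 1 - (s : ℤ))))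
    (hvanish : ∀ k : ℕ, 0 < k → k < p ^ s → ¬ p ∣ k →
      m₀ ((k : ℚ_[p]) / (p : ℚ_[p]) ^ s) = 0)
    (hmod : ∀ k : ℕ, 0 < k → k < p ^ s → p ∣ k →
      ‖m₀ ((k : ℚ_[p]) / (p : ℚ_[p]) ^ s)‖ = 1) :
    ∀ ξ : ℚ_[p], ‖ξ‖ ≤ 1 → ‖g ξ‖ = 1 := by
  intro ξ hξ
  have hp' := Fact.out (p := p.Prime)
  have hp0 : (p : ℚ_[p]) ≠ 0 := pcast_ne 0
  have hpr : (1 : ℝ) ≤ (p : ℝ) := by exact_mod_cast hp'.one_lt.le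
  have hprpos : (0 : ℝ) < (p : ℝ) := lt_of_lt_of_le one_pos hpr
  have hknorm : ∀ k : ℕ, ‖((k : ℕ) : ℚ_[p])‖ ≤ 1 := by
    intro k
    have : ((k : ℕ) : ℚ_[p]) = ((k : ℤ) : ℚ_[p]) := by push_cast; ring
    rw [this]
    exact Padic.norm_int_le_one _
  have hone : ∀ η : ℚ_[p], ‖η‖ ≤ 1 → m₀ η = 1 := by
    intro η hη
    have hsum : ∀ k ∈ Finset.range (p ^ s), β k * padicChar ((k : ℚ_[p]) * η) =
        β k * padicChar ((k : ℚ_[p]) * 0) := by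
      intro k _
      congr 1
      rw [mul_zero, padicChar_zero, padicChar_of_norm_le_one]
      calc ‖(k : ℚ_[p]) * η‖ = ‖((k : ℕ) : ℚ_[p])‖ * ‖η‖ := Padic.padicNormE.mul _ _
        _ ≤ 1 * 1 := mul_le_mul (hknorm k) hη (norm_nonneg _) zero_le_one
        _ = 1 := one_mul 1
    rw [hm₀, Finset.sum_congr rfl hsum, ← hm₀ 0, hm₀0]
  have hnorm1 : ∀ j : ℕ, j < s → ‖m₀ (ξ * (p : ℚ_[p]) ^ ((j : ℤ) + 1 - (s : ℤ)))‖ = 1 := by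
    intro j hj
    set t : ℕ := s - 1 - j with ht
    have hexp : (j : ℤ) + 1 - (s : ℤ) = -(t : ℤ) := by omega
    rw [hexp]
    by_cases ht0 : t = 0
    · rw [ht0]
      simp only [Nat.cast_zero, neg_zero, zpow_zero, mul_one]
      rw [hone ξ hξ, norm_one]
    · set zξ : ℤ_[p] := ⟨ξ, hξ⟩ with hzξ
      set a : ℕ := PadicInt.appr zξ t with ha
      have haless : a < p ^ t := PadicInt.appr_lt _ _
      have happrox : ‖ξ - ((a : ℕ) : ℚ_[p])‖ ≤ (p : ℝ) ^ (-(t : ℤ)) := by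
        have hspec : ‖zξ - ((a : ℕ) : ℤ_[p])‖ ≤ (p : ℝ) ^ (-(t : ℤ)) := by
          rw [PadicInt.norm_le_pow_iff_mem_span_pow]
          exact PadicInt.appr_spec t _
        rw [PadicInt.norm_def, PadicInt.coe_sub, PadicInt.coe_natCast] at hspec; exact hspec
      have hppownorm : ‖(p : ℚ_[p]) ^ (-(t : ℤ))‖ = (p : ℝ) ^ (t : ℤ) := by
        rw [norm_zpow, Padic.norm_p, inv_zpow, ← zpow_neg, neg_neg]
      have hybound : ‖(ξ - ((a : ℕ) : ℚ_[p])) * (p : ℚ_[p]) ^ (-(t : ℤ))‖ ≤ 1 := by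
        rw [Padic.padicNormE.mul, hppownorm]
        calc ‖ξ - ((a : ℕ) : ℚ_[p])‖ * (p : ℝ) ^ (t : ℤ)
            ≤ (p : ℝ) ^ (-(t : ℤ)) * (p : ℝ) ^ (t : ℤ) :=
              mul_le_mul_of_nonneg_right happrox (zpow_pos hprpos _).le
          _ = 1 := by rw [← zpow_add₀ hprpos.ne', neg_add_cancel, zpow_zero]
      have hts : t ≤ s - 1 := by omega
      have hst1 : 1 ≤ s - t := by omega
      have hkey : m₀ (ξ * (p : ℚ_[p]) ^ (-(t : ℤ))) =
          m₀ (((a * p ^ (s - t) : ℕ) : ℚ_[p]) / (p : ℚ_[p]) ^ s) := by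
        rw [hm₀, hm₀]
        congr 1
        apply Finset.sum_congr rfl
        intro k _
        congr 1
        have hpq : ((p : ℚ_[p]) ^ (s - t : ℕ)) / (p : ℚ_[p]) ^ s = (p : ℚ_[p]) ^ (-(t : ℤ)) := by
          rw [← zpow_natCast (p : ℚ_[p]) (s - t), ← zpow_natCast (p : ℚ_[p]) s,
            ← zpow_sub₀ hp0]
          congr 1
          omega
        have harg : (k : ℚ_[p]) * (((a * p ^ (s - t) : ℕ) : ℚ_[p]) / (p : ℚ_[p]) ^ s) =
            (k : ℚ_[p]) * (((a : ℕ) : ℚ_[p]) * (p : ℚ_[p]) ^ (-(t : ℤ))) := by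
          rw [← hpq]
          push_cast
          ring
        have hsplit : (k : ℚ_[p]) * (ξ * (p : ℚ_[p]) ^ (-(t : ℤ))) =
            (k : ℚ_[p]) * (((a : ℕ) : ℚ_[p]) * (p : ℚ_[p]) ^ (-(t : ℤ))) +
            (k : ℚ_[p]) * ((ξ - ((a : ℕ) : ℚ_[p])) * (p : ℚ_[p]) ^ (-(t : ℤ))) := by
          ring
        rw [harg, hsplit, padicChar_add_int]
        calc ‖(k : ℚ_[p]) * ((ξ - ((a : ℕ) : ℚ_[p])) * (p : ℚ_[p]) ^ (-(t : ℤ)))‖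
            = ‖((k : ℕ) : ℚ_[p])‖ * ‖(ξ - ((a : ℕ) : ℚ_[p])) * (p : ℚ_[p]) ^ (-(t : ℤ))‖ :=
              Padic.padicNormE.mul _ _
          _ ≤ 1 * 1 := mul_le_mul (hknorm k) hybound (norm_nonneg _) zero_le_one
          _ = 1 := one_mul 1
      rw [hkey]
      by_cases ha0 : a = 0
      · rw [ha0]
        simp only [Nat.cast_zero, zero_mul, Nat.cast_zero, zero_div]
        rw [hone 0 (by simp), norm_one]
      · apply hmod
        · exact Nat.mul_pos (Nat.pos_of_ne_zero ha0) (Nat.pow_pos hp'.pos)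
        · calc a * p ^ (s - t) < p ^ t * p ^ (s - t) :=
              (Nat.mul_lt_mul_right (Nat.pow_pos hp'.pos)).mpr haless
            _ = p ^ s := by rw [← pow_add]; congr 1; omega
        · exact dvd_mul_of_dvd_right (dvd_pow_self p (by omega)) a
  rw [hg]
  have hfin : ∀ j ∉ Finset.range s, m₀ (ξ * (p : ℚ_[p]) ^ ((j : ℤ) + 1 - (s : ℤ))) = 1 := by
    intro j hj
    rw [Finset.mem_range, not_lt] at hj
    apply hone
    have he : (0 : ℤ) ≤ (j : ℤ) + 1 - (s : ℤ) := by omega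
    have hple : ‖(p : ℚ_[p]) ^ ((j : ℤ) + 1 - (s : ℤ))‖ ≤ 1 := by
      rw [norm_zpow, Padic.norm_p]
      calc ((p : ℝ)⁻¹) ^ ((j : ℤ) + 1 - (s : ℤ)) = ((p : ℝ) ^ ((j : ℤ) + 1 - (s : ℤ)))⁻¹ := by
            rw [inv_zpow]
        _ ≤ 1 := by
            rw [inv_le_one_iff₀]
            right
            exact one_le_zpow₀ hpr he
    calc ‖ξ * (p : ℚ_[p]) ^ ((j : ℤ) + 1 - (s : ℤ))‖
        = ‖ξ‖ * ‖(p : ℚ_[p]) ^ ((j : ℤ) + 1 - (s : ℤ))‖ := Padic.padicNormE.mul _ _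
      _ ≤ 1 * 1 := mul_le_mul hξ hple (norm_nonneg _) zero_le_one
      _ = 1 := one_mul 1
  rw [tprod_eq_prod hfin, norm_prod]
  apply Finset.prod_eq_one
  intro j hj
  exact hnorm1 j (Finset.mem_range.mp hj)

end
end
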